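/- In a closed GS 2-manifold, counting folds by their α-limits equals counting them by their ω-limits, yielding the identity (W_{s_u} + W_r) + 2(D_{ss_u} + D_{sr} + D_r) + (6T_r + 4T_{ssr} + 2T_{ssa}) = (W_{s_s} + W_a) + 2(D_{ss_s} + D_{sa} + D_a) + (6T_a + 2T_{ssr} + 4T_{ssa}). -/

import Mathlib

open Finset

/-- The possible natures of GS singularities that are limits of folds. -/
inductive GSNature
  | Wa | Wss | Wsu | Wr
  | Da | Dsa | Dsss | Dssu | Dsr | Dr
  | Ta | Tssa | Tssr | Tr
  | other
  deriving DecidableEq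

open GSNature

/-- Number of folds having a singularity of the given nature as α-limit. -/
def alphaFolds : GSNature → ℕ
  | Wsu => 1 | Wr => 1
  | Dssu => 2 | Dsr => 2 | Dr => 2
  | Tr => 6 | Tssr => 4 | Tssa => 2
  | _ => 0

/-- Number of folds having a singularity of the given nature as ω-limit. -/
def omegaFolds : GSNature → ℕ
  | Wss => 1 | Wa => 1
  | Dsss => 2 | Dsa => 2 | Da => 2
  | Ta => 6 | Tssr => 2 | Tssa => 4
  | _ => 0

instance : Fintype GSNature :=
  ⟨⟨[Wa, Wss, Wsu, Wr, Da, Dsa, Dsss, Dssu, Dsr, Dr, Ta, Tssa, Tssr, Tr, other], by decide⟩,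
   fun η => by cases η <;> decide⟩

theorem GSNature.sum_univ {M : Type*} [AddCommMonoid M] (g : GSNature → M) :
    ∑ η, g η =
      g Wa + g Wss + g Wsu + g Wr + g Da + g Dsa + g Dsss + g Dssu + g Dsr + g Dr
        + g Ta + g Tssa + g Tssr + g Tr + g other := by
  simp only [Finset.sum, univ, Fintype.elems, Multiset.map_coe, Multiset.sum_coe, List.map_cons,
    List.map_nil, List.sum_cons, List.sum_nil, add_zero, add_assoc]

namespace Fintype

variable {ι κ : Type*} [Fintype ι] [Fintype κ] [DecidableEq κ]

theorem card_eq_sum_of_card_fiber (f : ι → κ) {w : κ → ℕ} (hw : ∀ k, #{i | f i = k} = w k) :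
    card ι = ∑ k, w k := by
  rw [← card_univ, card_eq_sum_card_fiberwise fun i _ => mem_univ (f i)]
  exact Finset.sum_congr rfl fun k _ => hw k

theorem sum_comp_eq_sum_card_fiber_smul {M : Type*} [AddCommMonoid M] (g : ι → κ) (f : κ → M) :
    ∑ i, f (g i) = ∑ k, #{i | g i = k} • f k := by
  simp only [← Finset.sum_fiberwise' univ g f, sum_const]

end Fintype

/-- In a closed GS 2-manifold every fold has an α-limit and an ω-limit among the
singularities, and each singularity is the α- (resp. ω-) limit of a number of folds
determined by its nature.  Counting the folds by α-limits and by ω-limits yields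
`(W_{s_u} + W_r) + 2(D_{ss_u} + D_{sr} + D_r) + (6T_r + 4T_{ssr} + 2T_{ssa})
 = (W_{s_s} + W_a) + 2(D_{ss_s} + D_{sa} + D_a) + (6T_a + 2T_{ssr} + 4T_{ssa})`. -/
theorem fold_counting_identity
    (Sing Fold : Type*) [Fintype Sing] [Fintype Fold] [DecidableEq Sing]
    (nature : Sing → GSNature) (α ω : Fold → Sing)
    (hα : ∀ s, (univ.filter (fun f => α f = s)).card = alphaFolds (nature s))
    (hω : ∀ s, (univ.filter (fun f => ω f = s)).card = omegaFolds (nature s))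
    (cnt : GSNature → ℕ)
    (hcnt : ∀ η, cnt η = (univ.filter (fun s => nature s = η)).card) :
    (cnt Wsu + cnt Wr) + 2 * (cnt Dssu + cnt Dsr + cnt Dr)
        + (6 * cnt Tr + 4 * cnt Tssr + 2 * cnt Tssa)
      = (cnt Wss + cnt Wa) + 2 * (cnt Dsss + cnt Dsa + cnt Da)
        + (6 * cnt Ta + 2 * cnt Tssr + 4 * cnt Tssa) := by
  -- both sides equal `Fintype.card Fold`, counted by α-limits and by ω-limits
  have double_count : ∑ η, cnt η • alphaFolds η = ∑ η, cnt η • omegaFolds η := by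
    simp only [hcnt, ← Fintype.sum_comp_eq_sum_card_fiber_smul,
      ← Fintype.card_eq_sum_of_card_fiber α hα, ← Fintype.card_eq_sum_of_card_fiber ω hω]
  simp only [GSNature.sum_univ, alphaFolds, omegaFolds, smul_eq_mul] at double_count
  omega
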